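/- There exists an absolute constant K > 0 with the following property. Let (Ω, F, P) be a probability space, let T be a countable set equipped with a pseudometric d of finite diameter, and let {X_t : t ∈ T} be a family of real random variables such that X_s = X_t almost surely whenever d(s, t) = 0 and P(|X_s − X_t| > z) ≤ 2·exp(−z²/(2 d(s,t)²)) for all s, t ∈ T with d(s,t) > 0 and all z > 0. Then the Orlicz ψ₂-norm of sup_{s,t ∈ T} |X_s − X_t| satisfies ‖ sup_{s,t ∈ T} |X_s − X_t| ‖_{ψ₂} ≤ K ∫₀^{diam T} √(log D(ε, T, d)) dε, where the integral is interpreted as +∞ if the integrand fails to be integrable. -/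

import Mathlib

open MeasureTheory
open scoped ENNReal

universe u v

/-- The Orlicz `ψ₂`-norm of a real random variable `X`, where `ψ₂(t) = exp(t²) − 1`:
`‖X‖_{ψ₂} = inf {C > 0 : E[ψ₂(|X|/C)] ≤ 1}`, valued in `ℝ≥0∞` so that the infimum of the
empty set is `+∞`. -/
noncomputable def psi2Norm {Ω : Type u} [MeasurableSpace Ω] (μ : Measure Ω) (X : Ω → ℝ) :
    ℝ≥0∞ :=
  sInf (ENNReal.ofReal ''
    {C : ℝ | 0 < C ∧ ∫⁻ ω, ENNReal.ofReal (Real.exp ((|X ω| / C) ^ 2) - 1) ∂μ ≤ 1})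

/-- The square-root packing entropy `√(log D(ε, T, d))` of a pseudometric space `T`, valued
in `ℝ≥0∞`: the supremum over all finite `ε`-separated subsets `S ⊆ T` (i.e. sets whose
distinct points are at distance `> ε`) of `√(log #S)`; it equals `+∞` when the packing
number `D(ε, T, d)` is infinite. -/
noncomputable def sqrtLogPacking (T : Type v) [PseudoMetricSpace T] (ε : ℝ) : ℝ≥0∞ :=
  ⨆ (S : Finset T) (_ : ∀ s ∈ S, ∀ t ∈ S, s ≠ t → ε < dist s t),
    ENNReal.ofReal (Real.sqrt (Real.log (S.card : ℝ)))

/-!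
Chaining. Fix a finite `F ⊆ T` and the dyadic scales `e k = diam T / 2 ^ k`. Take maximal
`e k`-separated subsets `N k ⊆ F` and projections `proj k : F → N k` moving points by at most
`e k`. `N 0` is a single point, and for large `m` every `t` is at distance `0` from `proj m t`,
so almost surely `X t = X (proj m t)`. Telescoping along `proj m t, …, proj 0 t` bounds
`sup_{s,t ∈ F} |X s - X t|` by twice the sum over `k` of the maxima `M k` of the increments over
the links `(proj (k+1) t, proj k t)`. These links have length `≤ 3 e (k+1)` and there are at most
`|N (k+1)| |N k|` of them, so a union bound gives `M k` a sub-Gaussian tail and hence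
`‖M k‖_{ψ₂} ≲ e (k+1) √(1 + log |N (k+1)| + log |N k|)`. Both nets are `ε`-separated for
`ε ≤ e (k+1)`, so this is at most a constant times the entropy integral over
`(e (k+1) / 2, e (k+1)]`; these intervals are disjoint, and `‖·‖_{ψ₂}` is a norm. The countable
case follows from finite ones by monotone convergence.
-/

open Real Set Filter Topology
open scoped NNReal

/-- By definition, `psi2Norm μ f` is the infimum of the `C > 0` with
`∫⁻ ω, psi2 (|f ω| / C) ∂μ ≤ 1`. -/
noncomputable def psi2 (x : ℝ) : ℝ≥0∞ := ENNReal.ofReal (exp (x ^ 2) - 1)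

lemma continuous_psi2 : Continuous psi2 :=
  ENNReal.continuous_ofReal.comp (by fun_prop)

@[simp] lemma psi2_zero : psi2 0 = 0 := by simp [psi2]

lemma psi2_le_psi2 {x y : ℝ} (hx : 0 ≤ x) (hxy : x ≤ y) : psi2 x ≤ psi2 y :=
  ENNReal.ofReal_le_ofReal (sub_le_sub_right (exp_le_exp.2 (pow_le_pow_left₀ hx hxy 2)) 1)

lemma psi2_le_iff {x : ℝ} {L : ℝ≥0∞} (hL : L ≠ ⊤) :
    psi2 x ≤ L ↔ x ^ 2 ≤ log (1 + L.toReal) := by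
  rw [psi2, ENNReal.ofReal_le_iff_le_toReal hL, le_log_iff_exp_le (by positivity)]
  constructor <;> intro h <;> linarith

lemma psi2_add_div_le (x y : ℝ) {a b : ℝ} (ha : 0 < a) (hb : 0 < b) :
    psi2 ((x + y) / (a + b)) ≤
      ENNReal.ofReal (a / (a + b)) * psi2 (x / a) +
        ENNReal.ofReal (b / (a + b)) * psi2 (y / b) := by
  set u := x / a
  set v := y / b
  set w := a / (a + b)
  have hw : b / (a + b) = 1 - w := by simp only [w]; field_simp; ring
  have hw0 : 0 ≤ w := by positivity
  have hw1 : 0 ≤ 1 - w := by rw [← hw]; positivity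
  have hcomb : (x + y) / (a + b) = w * u + (1 - w) * v := by
    simp only [u, v, w]; field_simp; ring
  have hsq : (w * u + (1 - w) * v) ^ 2 ≤ w * u ^ 2 + (1 - w) * v ^ 2 := by
    nlinarith [mul_nonneg (mul_nonneg hw0 hw1) (sq_nonneg (u - v))]
  have hexp : exp ((w * u + (1 - w) * v) ^ 2) ≤ w * exp (u ^ 2) + (1 - w) * exp (v ^ 2) :=
    (exp_le_exp.2 hsq).trans <| by
      simpa using convexOn_exp.2 (mem_univ (u ^ 2)) (mem_univ (v ^ 2)) hw0 hw1 (by ring)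
  have hpos : ∀ z : ℝ, 0 ≤ exp (z ^ 2) - 1 := fun z => by
    linarith [add_one_le_exp (z ^ 2), sq_nonneg z]
  rw [hw, hcomb, psi2, psi2, psi2, ← ENNReal.ofReal_mul hw0, ← ENNReal.ofReal_mul hw1,
    ← ENNReal.ofReal_add (mul_nonneg hw0 (hpos u)) (mul_nonneg hw1 (hpos v))]
  exact ENNReal.ofReal_le_ofReal (by linarith)

lemma psi2_le_iSup_of_forall_le {ι : Type*} (a : ι → ℝ) {x : ℝ} (hx : 0 ≤ x)
    (h : ∀ b, (∀ i, a i ≤ b) → x ≤ b) : psi2 x ≤ ⨆ i, psi2 (a i) := by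
  set L := ⨆ i, psi2 (a i)
  rcases eq_or_ne L ⊤ with hL | hL
  · simp [hL]
  have hlog : 0 ≤ log (1 + L.toReal) := log_nonneg (by simp)
  have hbound : ∀ i, a i ≤ √(log (1 + L.toReal)) := fun i =>
    (le_abs_self _).trans (abs_le_sqrt ((psi2_le_iff hL).1 (le_iSup (fun i => psi2 (a i)) i)))
  exact (psi2_le_iff hL).2 ((Real.le_sqrt hx hlog).1 (h _ hbound))

lemma exists_lt_ofReal_of_add_lt_ofReal {x y : ℝ≥0∞} {c : ℝ} (h : x + y < ENNReal.ofReal c) :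
    ∃ a b : ℝ, x < ENNReal.ofReal a ∧ y < ENNReal.ofReal b ∧ a + b = c := by
  have hx : x ≠ ⊤ := (ENNReal.add_lt_top.1 (h.trans ENNReal.ofReal_lt_top)).1.ne
  have hy : y ≠ ⊤ := (ENNReal.add_lt_top.1 (h.trans ENNReal.ofReal_lt_top)).2.ne
  rw [← ENNReal.ofReal_toReal hx, ← ENNReal.ofReal_toReal hy,
    ← ENNReal.ofReal_add ENNReal.toReal_nonneg ENNReal.toReal_nonneg] at h
  have hc : x.toReal + y.toReal < c := (ENNReal.ofReal_lt_ofReal_iff'.1 h).1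
  set δ := (c - x.toReal - y.toReal) / 2
  have hδ : 0 < δ := by simp only [δ]; linarith
  refine ⟨x.toReal + δ, y.toReal + δ, ?_, ?_, by ring⟩ <;>
  · rw [ENNReal.lt_ofReal_iff_toReal_lt (by assumption)]
    linarith

lemma le_ofReal_rpow_of_le {p : ℝ≥0∞} {x θ : ℝ} (hp1 : p ≤ 1) (hpx : p ≤ ENNReal.ofReal x)
    (hx : 0 ≤ x) (hθ0 : 0 ≤ θ) (hθ1 : θ ≤ 1) : p ≤ ENNReal.ofReal (x ^ θ) := by
  rcases le_total x 1 with hx1 | hx1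
  · exact hpx.trans (ENNReal.ofReal_le_ofReal (self_le_rpow_of_le_one hx hx1 hθ1))
  · exact hp1.trans (ENNReal.one_le_ofReal.2 (one_le_rpow hx1 hθ0))

lemma lintegral_Ioi_mul_exp_neg_mul_sq {b : ℝ} (hb : 0 < b) :
    ∫⁻ t in Ioi 0, ENNReal.ofReal (t * exp (-b * t ^ 2)) = ENNReal.ofReal (2 * b)⁻¹ := by
  rw [← ofReal_integral_eq_lintegral_ofReal (integrable_mul_exp_neg_mul_sq hb).integrableOn
    (ae_restrict_of_forall_mem measurableSet_Ioi fun t (ht : 0 < t) => by positivity)]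
  have := integral_rpow_mul_exp_neg_mul_rpow (p := 2) (q := 1) (by norm_num) (by norm_num) hb
  norm_num at this
  congr 1
  simpa [rpow_neg_one, mul_comm] using this

section Psi2Norm

variable {Ω : Type*} [MeasurableSpace Ω] {μ : Measure Ω} {f g : Ω → ℝ}

lemma psi2Norm_le_ofReal {C : ℝ} (hC : 0 < C) (h : ∫⁻ ω, psi2 (|f ω| / C) ∂μ ≤ 1) :
    psi2Norm μ f ≤ ENNReal.ofReal C :=
  sInf_le ⟨C, ⟨hC, h⟩, rfl⟩

lemma lintegral_psi2_le_one_of_psi2Norm_lt {c : ℝ} (h : psi2Norm μ f < ENNReal.ofReal c) :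
    ∫⁻ ω, psi2 (|f ω| / c) ∂μ ≤ 1 := by
  obtain ⟨_, ⟨C, ⟨hC, hCf⟩, rfl⟩, hCc⟩ := sInf_lt_iff.1 h
  have hCc : C ≤ c := ((ENNReal.ofReal_lt_ofReal_iff_of_nonneg hC.le).1 hCc).le
  refine le_trans (lintegral_mono fun ω =>
    psi2_le_psi2 (div_nonneg (abs_nonneg _) (hC.le.trans hCc)) ?_) hCf
  exact div_le_div_of_nonneg_left (abs_nonneg _) hC hCc

lemma psi2Norm_le_of_forall_lt {D : ℝ≥0∞}
    (h : ∀ c : ℝ, D < ENNReal.ofReal c → ∫⁻ ω, psi2 (|f ω| / c) ∂μ ≤ 1) :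
    psi2Norm μ f ≤ D := by
  by_contra! hlt
  obtain ⟨c, -, hDc, hcf⟩ := ENNReal.lt_iff_exists_real_btwn.1 hlt
  have hc : 0 < c := ENNReal.ofReal_pos.1 (zero_le.trans_lt hDc)
  exact (psi2Norm_le_ofReal hc (h c hDc)).not_gt hcf

lemma psi2Norm_mono_ae (h : ∀ᵐ ω ∂μ, |f ω| ≤ |g ω|) : psi2Norm μ f ≤ psi2Norm μ g := by
  refine psi2Norm_le_of_forall_lt fun c hc => ?_
  have hc0 : 0 < c := ENNReal.ofReal_pos.1 (zero_le.trans_lt hc)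
  refine le_trans (lintegral_mono_ae ?_) (lintegral_psi2_le_one_of_psi2Norm_lt hc)
  filter_upwards [h] with ω hω
  exact psi2_le_psi2 (by positivity) (div_le_div_of_nonneg_right hω hc0.le)

@[simp] lemma psi2Norm_zero : psi2Norm μ 0 = 0 :=
  le_antisymm (psi2Norm_le_of_forall_lt fun c _ => by simp) zero_le

lemma psi2Norm_add_le (hf : AEMeasurable f μ) :
    psi2Norm μ (f + g) ≤ psi2Norm μ f + psi2Norm μ g := by
  refine psi2Norm_le_of_forall_lt fun c hc => ?_
  obtain ⟨a, b, hfa, hgb, rfl⟩ := exists_lt_ofReal_of_add_lt_ofReal hc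
  have ha : 0 < a := ENNReal.ofReal_pos.1 (zero_le.trans_lt hfa)
  have hb : 0 < b := ENNReal.ofReal_pos.1 (zero_le.trans_lt hgb)
  have hmeas : AEMeasurable (fun ω => psi2 (|f ω| / a)) μ :=
    continuous_psi2.measurable.comp_aemeasurable (hf.abs.div_const a)
  calc ∫⁻ ω, psi2 (|(f + g) ω| / (a + b)) ∂μ
      ≤ ∫⁻ ω, (ENNReal.ofReal (a / (a + b)) * psi2 (|f ω| / a)
          + ENNReal.ofReal (b / (a + b)) * psi2 (|g ω| / b)) ∂μ := by
        refine lintegral_mono fun ω => (psi2_le_psi2 (by positivity) ?_).trans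
          (psi2_add_div_le _ _ ha hb)
        exact div_le_div_of_nonneg_right (abs_add_le _ _) (by positivity)
    _ = ENNReal.ofReal (a / (a + b)) * ∫⁻ ω, psi2 (|f ω| / a) ∂μ
          + ENNReal.ofReal (b / (a + b)) * ∫⁻ ω, psi2 (|g ω| / b) ∂μ := by
        rw [lintegral_add_left' (hmeas.const_mul _), lintegral_const_mul' _ _ ENNReal.ofReal_ne_top,
          lintegral_const_mul' _ _ ENNReal.ofReal_ne_top]
    _ ≤ ENNReal.ofReal (a / (a + b)) * 1 + ENNReal.ofReal (b / (a + b)) * 1 := by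
        gcongr
        exacts [lintegral_psi2_le_one_of_psi2Norm_lt hfa, lintegral_psi2_le_one_of_psi2Norm_lt hgb]
    _ = 1 := by
        rw [mul_one, mul_one, ← ENNReal.ofReal_add (by positivity) (by positivity), ← add_div,
          div_self (by positivity), ENNReal.ofReal_one]

lemma psi2Norm_sum_le {ι : Type*} (s : Finset ι) {F : ι → Ω → ℝ}
    (hF : ∀ i ∈ s, AEMeasurable (F i) μ) :
    psi2Norm μ (∑ i ∈ s, F i) ≤ ∑ i ∈ s, psi2Norm μ (F i) := by
  classical
  induction s using Finset.induction_on with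
  | empty => simp
  | insert i s hi ih =>
    rw [Finset.sum_insert hi, Finset.sum_insert hi]
    exact (psi2Norm_add_le (hF i (Finset.mem_insert_self i s))).trans
      (add_le_add le_rfl (ih fun j hj => hF j (Finset.mem_insert_of_mem hj)))

lemma psi2Norm_le_of_monotone {u : ℕ → Ω → ℝ} (hu : ∀ n, AEMeasurable (u n) μ)
    (hu0 : ∀ n ω, 0 ≤ u n ω) (hmono : Monotone u) (hf : ∀ ω b, (∀ n, u n ω ≤ b) → |f ω| ≤ b)
    {D : ℝ≥0∞} (hD : ∀ n, psi2Norm μ (u n) ≤ D) : psi2Norm μ f ≤ D := by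
  refine psi2Norm_le_of_forall_lt fun c hc => ?_
  have hc0 : 0 < c := ENNReal.ofReal_pos.1 (zero_le.trans_lt hc)
  have hmono' : ∀ ω, Monotone fun n => psi2 (|u n ω| / c) := fun ω n m hnm => by
    simp only [abs_of_nonneg (hu0 _ ω)]
    exact psi2_le_psi2 (div_nonneg (hu0 n ω) hc0.le) (by gcongr; exact hmono hnm ω)
  calc ∫⁻ ω, psi2 (|f ω| / c) ∂μ ≤ ∫⁻ ω, ⨆ n, psi2 (|u n ω| / c) ∂μ := by
        refine lintegral_mono fun ω => psi2_le_iSup_of_forall_le _ (by positivity) fun b hb => ?_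
        rw [div_le_iff₀ hc0]
        exact hf ω _ fun n => by simpa [abs_of_nonneg (hu0 n ω), div_le_iff₀ hc0] using hb n
    _ = ⨆ n, ∫⁻ ω, psi2 (|u n ω| / c) ∂μ :=
        lintegral_iSup' (fun n => continuous_psi2.measurable.comp_aemeasurable
          ((hu n).abs.div_const c)) (ae_of_all _ hmono')
    _ ≤ 1 := iSup_le fun n => lintegral_psi2_le_one_of_psi2Norm_lt ((hD n).trans_lt hc)

lemma lintegral_psi2_div_eq (hf : AEMeasurable f μ) {C : ℝ} (hC : 0 < C) :
    ∫⁻ ω, psi2 (|f ω| / C) ∂μ =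
      ∫⁻ t in Ioi 0, μ {ω | t < |f ω|} * ENNReal.ofReal (2 / C ^ 2 * (t * exp ((t / C) ^ 2))) := by
  have hderiv : ∀ x,
      HasDerivAt (fun t => exp ((t / C) ^ 2)) (2 / C ^ 2 * (x * exp ((x / C) ^ 2))) x := fun x => by
      have h : HasDerivAt (fun t => (t / C) ^ 2) (2 * x / C ^ 2) x := by
        simpa [div_pow] using (hasDerivAt_pow 2 x).div_const (C ^ 2)
      exact h.exp.congr_deriv (by ring)
  have hcont : Continuous fun t => 2 / C ^ 2 * (t * exp ((t / C) ^ 2)) := by fun_prop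
  rw [← lintegral_comp_eq_lintegral_meas_lt_mul μ (ae_of_all _ fun ω => abs_nonneg (f ω))
    hf.abs (fun t _ => hcont.intervalIntegrable 0 t)
    (ae_restrict_of_forall_mem measurableSet_Ioi fun t (ht : 0 < t) => by positivity)]
  refine lintegral_congr fun ω => ?_
  rw [intervalIntegral.integral_eq_sub_of_hasDerivAt (fun x _ => hderiv x)
    (hcont.intervalIntegrable _ _), psi2]
  simp

/-- Interpolating the tail bound with the trivial bound `1`, with exponent `1 / (1 + log A)`,
absorbs the prefactor `A` into the constant `e`. -/
lemma measure_lt_abs_le_of_tail [IsProbabilityMeasure μ] {A σ : ℝ} (hA : 1 ≤ A)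
    (htail : ∀ t > 0, μ {ω | t < |f ω|} ≤ ENNReal.ofReal (A * exp (-(t / σ) ^ 2))) {t : ℝ}
    (ht : 0 < t) : μ {ω | t < |f ω|} ≤ ENNReal.ofReal (exp (1 - (t / σ) ^ 2 / (1 + log A))) := by
  have hlogA : 0 ≤ log A := log_nonneg hA
  have hL : 0 < 1 + log A := by positivity
  refine (le_ofReal_rpow_of_le (θ := 1 / (1 + log A)) prob_le_one (htail t ht) (by positivity)
    (by positivity) ((div_le_one hL).2 (by linarith))).trans (ENNReal.ofReal_le_ofReal ?_)
  rw [mul_rpow (by linarith) (by positivity), rpow_def_of_pos (by linarith), ← exp_mul, ← exp_add]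
  refine exp_le_exp.2 ?_
  have : log A * (1 / (1 + log A)) ≤ 1 := by rw [mul_one_div, div_le_one hL]; linarith
  rw [sub_eq_add_neg, ← neg_div, div_eq_mul_one_div (-(t / σ) ^ 2)]
  linarith

lemma psi2Norm_le_of_tail [IsProbabilityMeasure μ] (hf : AEMeasurable f μ) {A σ : ℝ}
    (hA : 1 ≤ A) (hσ : 0 < σ)
    (htail : ∀ t > 0, μ {ω | t < |f ω|} ≤ ENNReal.ofReal (A * exp (-(t / σ) ^ 2))) :
    psi2Norm μ f ≤ ENNReal.ofReal (2 * σ * √(1 + log A)) := by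
  set L := 1 + log A
  have hL : 0 < L := by linarith [log_nonneg hA]
  set C := 2 * σ * √L
  have hC : 0 < C := by positivity
  have hC2 : C ^ 2 = 4 * σ ^ 2 * L := by simp only [C]; rw [mul_pow, sq_sqrt hL.le]; ring
  set α := 3 / (4 * σ ^ 2 * L)
  have hα : 0 < α := by positivity
  refine psi2Norm_le_ofReal hC ?_
  calc ∫⁻ ω, psi2 (|f ω| / C) ∂μ
      ≤ ∫⁻ t in Ioi 0, ENNReal.ofReal (exp 1 * (2 / C ^ 2)) *
          ENNReal.ofReal (t * exp (-α * t ^ 2)) := by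
        rw [lintegral_psi2_div_eq hf hC]
        refine setLIntegral_mono' measurableSet_Ioi fun t (ht : 0 < t) => ?_
        have hexp : exp (1 - (t / σ) ^ 2 / L) * exp ((t / C) ^ 2) = exp 1 * exp (-α * t ^ 2) := by
          rw [← exp_add, ← exp_add, div_pow, div_pow, hC2]
          congr 1
          simp only [α]
          field_simp
          ring
        refine (mul_le_mul_left (measure_lt_abs_le_of_tail hA htail ht) _).trans_eq ?_
        rw [← ENNReal.ofReal_mul (by positivity), ← ENNReal.ofReal_mul (by positivity)]
        congr 1
        linear_combination (2 / C ^ 2 * t) * hexp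
    _ = ENNReal.ofReal (exp 1 / 3) := by
        rw [lintegral_const_mul' _ _ ENNReal.ofReal_ne_top, lintegral_Ioi_mul_exp_neg_mul_sq hα,
          ← ENNReal.ofReal_mul (by positivity), hC2]
        congr 1
        simp only [α]
        field_simp
    _ ≤ 1 := ENNReal.ofReal_le_one.2 (by linarith [exp_one_lt_d9])

end Psi2Norm

/-- Computed in `ℝ≥0`, so that the maximum over an empty `P` is `0`. -/
noncomputable def pairSup {α : Type*} (x : α → ℝ) (P : Finset (α × α)) : ℝ :=
  (P.sup fun p => ‖x p.1 - x p.2‖₊ : ℝ≥0)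

section PairSup

variable {α : Type*} {x : α → ℝ} {P : Finset (α × α)}

lemma pairSup_nonneg : 0 ≤ pairSup x P := NNReal.coe_nonneg _

lemma abs_sub_le_pairSup {p : α × α} (hp : p ∈ P) : |x p.1 - x p.2| ≤ pairSup x P := by
  have := Finset.le_sup (f := fun p => ‖x p.1 - x p.2‖₊) hp
  rw [← Real.norm_eq_abs, ← coe_nnnorm]
  exact_mod_cast this

lemma pairSup_le {b : ℝ} (hb : 0 ≤ b) (h : ∀ p ∈ P, |x p.1 - x p.2| ≤ b) : pairSup x P ≤ b := by
  rw [pairSup, ← Real.coe_toNNReal b hb, NNReal.coe_le_coe, Finset.sup_le_iff]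
  intro p hp
  rw [← NNReal.coe_le_coe, coe_nnnorm, Real.norm_eq_abs, Real.coe_toNNReal b hb]
  exact h p hp

lemma exists_lt_abs_sub_of_lt_pairSup {z : ℝ} (hz : 0 ≤ z) (h : z < pairSup x P) :
    ∃ p ∈ P, z < |x p.1 - x p.2| := by
  by_contra! hle
  exact (pairSup_le hz hle).not_gt h

lemma pairSup_mono {Q : Finset (α × α)} (h : P ⊆ Q) : pairSup x P ≤ pairSup x Q :=
  pairSup_le pairSup_nonneg fun _ hp => abs_sub_le_pairSup (h hp)

lemma measurable_pairSup {Ω : Type*} [MeasurableSpace Ω] {X : α → Ω → ℝ}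
    (hX : ∀ t, Measurable (X t)) (P : Finset (α × α)) :
    Measurable fun ω => pairSup (X · ω) P := by
  have : Measurable (P.sup fun p ω => ‖X p.1 ω - X p.2 ω‖₊) :=
    Finset.sup_induction measurable_const (fun _ hf _ hg => hf.sup hg)
      fun p _ => ((hX p.1).sub (hX p.2)).nnnorm
  convert measurable_coe_nnreal_real.comp this using 2 with ω
  simp [pairSup, Finset.sup_apply]

end PairSup

lemma pairSup_le_two_mul_sum_chain {α : Type*} [DecidableEq α] (x : α → ℝ) (F : Finset α)
    (proj : ℕ → α → α) (m : ℕ) (htop : ∀ s ∈ F, ∀ t ∈ F, proj 0 s = proj 0 t) (hbot : ∀ t ∈ F, x (proj m t) = x t) :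
    pairSup x (F ×ˢ F) ≤
      2 * ∑ k ∈ Finset.range m, pairSup x (F.image fun t => (proj (k + 1) t, proj k t)) := by
  set S := ∑ k ∈ Finset.range m, pairSup x (F.image fun t => (proj (k + 1) t, proj k t))
  have hchain : ∀ t ∈ F, |x t - x (proj 0 t)| ≤ S := fun t ht => by
    rw [← hbot t ht, ← Finset.sum_range_sub (fun k => x (proj k t))]
    exact (Finset.abs_sum_le_sum_abs _ _).trans
      (Finset.sum_le_sum fun k _ =>
        abs_sub_le_pairSup (Finset.mem_image_of_mem (fun t => (proj (k + 1) t, proj k t)) ht))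
  have hS : 0 ≤ S := Finset.sum_nonneg fun _ _ => pairSup_nonneg
  refine pairSup_le (by positivity) fun p hp => ?_
  obtain ⟨hs, ht⟩ := Finset.mem_product.1 hp
  calc |x p.1 - x p.2| ≤ |x p.1 - x (proj 0 p.1)| + |x p.2 - x (proj 0 p.2)| := by
        rw [htop _ hs _ ht, abs_sub_comm (x p.2)]
        exact abs_sub_le _ _ _
    _ ≤ 2 * S := by linarith [hchain _ hs, hchain _ ht]

section Packing

variable {T : Type*} [PseudoMetricSpace T]

lemma ofReal_sqrt_log_card_le_sqrtLogPacking {N : Finset T} {δ ε : ℝ}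
    (hN : ∀ u ∈ N, ∀ v ∈ N, u ≠ v → δ < dist u v) (hε : ε ≤ δ) :
    ENNReal.ofReal √(log N.card) ≤ sqrtLogPacking T ε :=
  le_iSup₂_of_le N (fun u hu v hv huv => hε.trans_lt (hN u hu v hv huv)) le_rfl

lemma ofReal_sqrt_log_two_le_sqrtLogPacking {ε : ℝ} (hε0 : 0 ≤ ε)
    (hε : ε < Metric.diam (univ : Set T)) : ENNReal.ofReal √(log 2) ≤ sqrtLogPacking T ε := by
  classical
  obtain ⟨s, t, hst⟩ : ∃ s t : T, ε < dist s t := by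
    by_contra! h
    exact hε.not_ge (Metric.diam_le_of_forall_dist_le hε0 fun s _ t _ => h s t)
  have hne : s ≠ t := by rintro rfl; rw [dist_self] at hst; linarith
  have hcard : (({s, t} : Finset T).card : ℝ) = 2 := by
    rw [Finset.card_pair hne]; norm_num
  rw [← hcard]
  refine ofReal_sqrt_log_card_le_sqrtLogPacking (δ := ε) (fun u hu v hv huv => ?_) le_rfl
  simp only [Finset.mem_insert, Finset.mem_singleton] at hu hv
  rcases hu with rfl | rfl <;> rcases hv with rfl | rfl
  exacts [absurd rfl huv, hst, dist_comm u v ▸ hst, absurd rfl huv]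

lemma ofReal_sqrt_one_add_log_two_mul_le {a b c : ℕ} {s : ℝ≥0∞} (hc : 1 ≤ c) (hcab : c ≤ a * b)
    (h2 : ENNReal.ofReal √(log 2) ≤ s) (ha : ENNReal.ofReal √(log a) ≤ s)
    (hb : ENNReal.ofReal √(log b) ≤ s) :
    ENNReal.ofReal √(1 + log (2 * c)) ≤ 3 * s := by
  rcases eq_or_ne s ⊤ with rfl | hs
  · simp
  have hsq {y : ℝ} (hy : ENNReal.ofReal √y ≤ s) : y ≤ s.toReal ^ 2 := by
    rw [ENNReal.ofReal_le_iff_le_toReal hs] at hy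
    exact (sqrt_le_iff.1 hy).2
  have ha1 : (1 : ℝ) ≤ a := by exact_mod_cast Nat.pos_of_ne_zero (by rintro rfl; omega)
  have hb1 : (1 : ℝ) ≤ b := by exact_mod_cast Nat.pos_of_ne_zero (by rintro rfl; omega)
  have hlog : log (2 * c) ≤ log 2 + log a + log b := by
    rw [← log_mul (by norm_num) (by positivity), ← log_mul (by positivity) (by positivity),
      mul_assoc]
    gcongr
    exact_mod_cast hcab
  have hone : 1 ≤ 2 * log 2 := by linarith [log_two_gt_d9]
  rw [← ENNReal.ofReal_toReal hs, ← ENNReal.ofReal_ofNat 3, ← ENNReal.ofReal_mul (by norm_num)]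
  refine ENNReal.ofReal_le_ofReal (sqrt_le_iff.2 ⟨by positivity, ?_⟩)
  nlinarith [hsq h2, hsq ha, hsq hb]

lemma exists_separated_net (F : Finset T) {ε : ℝ} (hε : 0 ≤ ε) :
    ∃ N ⊆ F, (∀ u ∈ N, ∀ v ∈ N, u ≠ v → ε < dist u v) ∧
      ∃ proj : T → T, ∀ t ∈ F, proj t ∈ N ∧ dist t (proj t) ≤ ε := by
  set S := Metric.maximalSeparatedSet ε.toNNReal (F : Set T)
  have hSF : S ⊆ F := Metric.maximalSeparatedSet_subset
  have hfin : S.Finite := F.finite_toSet.subset hSF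
  have hcover := Metric.isCover_maximalSeparatedSet (ε := ε.toNNReal) (A := (F : Set T))
    (ne_top_of_le_ne_top (F.finite_toSet.encard_lt_top.ne)
      (Metric.packingNumber_le_encard_self _))
  have hcover' : ∀ t ∈ F, ∃ u ∈ S, dist t u ≤ ε := fun t ht => by
    obtain ⟨u, hu, htu⟩ := hcover ht
    refine ⟨u, hu, ?_⟩
    have htu : edist t u ≤ ENNReal.ofReal ε := htu
    rwa [edist_dist, ENNReal.ofReal_le_ofReal_iff hε] at htu
  choose! proj hproj using hcover'
  refine ⟨hfin.toFinset, by simpa using hSF, fun u hu v hv huv => ?_, proj,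
    fun t ht => ⟨hfin.mem_toFinset.2 (hproj t ht).1, (hproj t ht).2⟩⟩
  have huv : ENNReal.ofReal ε < edist u v := Metric.isSeparated_maximalSeparatedSet
    (hfin.mem_toFinset.1 hu) (hfin.mem_toFinset.1 hv) huv
  rw [edist_dist, ENNReal.ofReal_lt_ofReal_iff'] at huv
  exact huv.1

lemma eventually_forall_dist_le_imp_eq_zero (F : Finset T) {e : ℕ → ℝ}
    (he : Tendsto e atTop (𝓝 0)) :
    ∀ᶠ n in atTop, ∀ s ∈ F, ∀ t ∈ F, dist s t ≤ e n → dist s t = 0 := by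
  refine (eventually_all_finset F).2 fun s _ => (eventually_all_finset F).2 fun t _ => ?_
  rcases (dist_nonneg : 0 ≤ dist s t).eq_or_lt with h | h
  · exact Eventually.of_forall fun _ _ => h.symm
  · filter_upwards [he.eventually (gt_mem_nhds h)] with n hn hle
    exact absurd (hle.trans_lt hn) (lt_irrefl _)

end Packing

lemma ofReal_sub_mul_le_setLIntegral_Ioc {f : ℝ → ℝ≥0∞} {a b : ℝ} {c : ℝ≥0∞}
    (h : ∀ x ∈ Ioc a b, c ≤ f x) : ENNReal.ofReal (b - a) * c ≤ ∫⁻ x in Ioc a b, f x := by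
  rw [mul_comm, ← Real.volume_Ioc, ← setLIntegral_const]
  exact setLIntegral_mono' measurableSet_Ioc h

lemma sum_setLIntegral_Ioc_le {e : ℕ → ℝ} (he : Antitone e) (he0 : ∀ k, 0 ≤ e k)
    (f : ℝ → ℝ≥0∞) (m : ℕ) :
    ∑ k ∈ Finset.range m, ∫⁻ x in Ioc (e (k + 1)) (e k), f x ≤ ∫⁻ x in Ioc 0 (e 0), f x :=
  calc ∑ k ∈ Finset.range m, ∫⁻ x in Ioc (e (k + 1)) (e k), f x
      ≤ ∑' k, ∫⁻ x in Ioc (e (k + 1)) (e k), f x := ENNReal.sum_le_tsum _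
    _ = ∫⁻ x in ⋃ k, Ioc (e (k + 1)) (e k), f x :=
        (lintegral_iUnion (fun _ => measurableSet_Ioc) he.pairwise_disjoint_on_Ioc_succ f).symm
    _ ≤ ∫⁻ x in Ioc 0 (e 0), f x :=
        lintegral_mono_set (iUnion_subset fun k => Ioc_subset_Ioc (he0 _) (he (Nat.zero_le k)))

lemma sum_setLIntegral_dyadic_le {Δ : ℝ} (hΔ : 0 ≤ Δ) (f : ℝ → ℝ≥0∞) (m : ℕ) :
    ∑ k ∈ Finset.range m, ∫⁻ x in Ioc (Δ / 2 ^ (k + 1) / 2) (Δ / 2 ^ (k + 1)), f x ≤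
      ∫⁻ x in Ioc 0 Δ, f x := by
  have he : Antitone fun k : ℕ => Δ / 2 ^ (k + 1) := fun j k hjk =>
    div_le_div_of_nonneg_left hΔ (by positivity) (pow_le_pow_right₀ one_le_two (by omega))
  have hhalf (k : ℕ) : Δ / 2 ^ (k + 1) / 2 = Δ / 2 ^ (k + 1 + 1) := by rw [div_div, ← pow_succ]
  simp only [hhalf]
  exact (sum_setLIntegral_Ioc_le he (fun k => by positivity) f m).trans
    (lintegral_mono_set (Ioc_subset_Ioc le_rfl (div_le_self hΔ (by norm_num))))

structure IsSubGaussianProcess {Ω T : Type*} [MeasurableSpace Ω] [PseudoMetricSpace T]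
    (μ : Measure Ω) (X : T → Ω → ℝ) : Prop where
  ae_eq_of_dist_eq_zero : ∀ s t : T, dist s t = 0 → ∀ᵐ ω ∂μ, X s ω = X t ω
  measure_lt_abs_sub_le : ∀ s t : T, 0 < dist s t → ∀ z : ℝ, 0 < z →
    μ {ω | z < |X s ω - X t ω|} ≤ ENNReal.ofReal (2 * exp (-z ^ 2 / (2 * (dist s t) ^ 2)))

namespace IsSubGaussianProcess

variable {Ω T : Type*} [MeasurableSpace Ω] [PseudoMetricSpace T] {μ : Measure Ω}
  {X : T → Ω → ℝ}

lemma measure_lt_abs_sub_le_of_dist_le (hX : IsSubGaussianProcess μ X) {s t : T} {r z : ℝ}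
    (hst : dist s t ≤ r) (hz : 0 < z) :
    μ {ω | z < |X s ω - X t ω|} ≤ ENNReal.ofReal (2 * exp (-(z / (2 * r)) ^ 2)) := by
  rcases (dist_nonneg : 0 ≤ dist s t).eq_or_lt with hd | hd
  · refine (measure_mono_null ?_ (ae_iff.1 (hX.ae_eq_of_dist_eq_zero s t hd.symm))).trans_le
      zero_le
    intro ω (hω : z < |X s ω - X t ω|) (h : X s ω = X t ω)
    rw [h, sub_self, abs_zero] at hω
    exact hz.not_gt hω
  refine (hX.measure_lt_abs_sub_le s t hd z hz).trans (ENNReal.ofReal_le_ofReal ?_)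
  gcongr
  rw [neg_div, neg_le_neg_iff, div_pow, mul_pow]
  gcongr
  nlinarith

lemma ae_forall_eq_of_dist_eq_zero [Countable T] (hX : IsSubGaussianProcess μ X) :
    ∀ᵐ ω ∂μ, ∀ s t : T, dist s t = 0 → X s ω = X t ω := by
  simp only [ae_all_iff, eventually_imp_distrib_left]
  exact hX.ae_eq_of_dist_eq_zero

lemma psi2Norm_pairSup_le [IsProbabilityMeasure μ] (hX : IsSubGaussianProcess μ X)
    (hmeas : ∀ t, Measurable (X t)) {P : Finset (T × T)} (hP : P.Nonempty) {r : ℝ} (hr : 0 < r)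
    (hPr : ∀ p ∈ P, dist p.1 p.2 ≤ r) :
    psi2Norm μ (fun ω => pairSup (X · ω) P) ≤ ENNReal.ofReal (4 * r * √(1 + log (2 * P.card))) := by
  have hA : (1 : ℝ) ≤ 2 * P.card := by
    have : (1 : ℝ) ≤ P.card := by exact_mod_cast hP.card_pos
    linarith
  refine (psi2Norm_le_of_tail (measurable_pairSup hmeas P).aemeasurable hA
    (by positivity : 0 < 2 * r) fun z hz => ?_).trans_eq (by ring_nf)
  calc μ {ω | z < |pairSup (X · ω) P|}
      ≤ μ (⋃ p ∈ P, {ω | z < |X p.1 ω - X p.2 ω|}) := by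
        refine measure_mono fun ω (hω : z < |pairSup (X · ω) P|) => ?_
        rw [abs_of_nonneg pairSup_nonneg] at hω
        obtain ⟨p, hp, hlt⟩ := exists_lt_abs_sub_of_lt_pairSup hz.le hω
        exact mem_biUnion hp hlt
    _ ≤ ∑ p ∈ P, μ {ω | z < |X p.1 ω - X p.2 ω|} := measure_biUnion_finset_le _ _
    _ ≤ ∑ _p ∈ P, ENNReal.ofReal (2 * exp (-(z / (2 * r)) ^ 2)) :=
        Finset.sum_le_sum fun p hp => hX.measure_lt_abs_sub_le_of_dist_le (hPr p hp) hz
    _ = ENNReal.ofReal (2 * P.card * exp (-(z / (2 * r)) ^ 2)) := by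
        rw [Finset.sum_const, nsmul_eq_mul, ← ENNReal.ofReal_natCast,
          ← ENNReal.ofReal_mul (by positivity)]
        ring_nf

lemma psi2Norm_pairSup_le_setLIntegral [IsProbabilityMeasure μ] (hX : IsSubGaussianProcess μ X)
    (hmeas : ∀ t, Measurable (X t)) {N₁ N₂ : Finset T} {P : Finset (T × T)} (hP : P.Nonempty)
    (hPN : P ⊆ N₁ ×ˢ N₂) {a : ℝ} (ha : 0 < a) (haT : a < Metric.diam (univ : Set T))
    (hN₁ : ∀ u ∈ N₁, ∀ v ∈ N₁, u ≠ v → a < dist u v)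
    (hN₂ : ∀ u ∈ N₂, ∀ v ∈ N₂, u ≠ v → a < dist u v) (hPa : ∀ p ∈ P, dist p.1 p.2 ≤ 3 * a) :
    psi2Norm μ (fun ω => pairSup (X · ω) P) ≤
      ENNReal.ofReal 72 * ∫⁻ ε in Ioc (a / 2) a, sqrtLogPacking T ε := by
  have hpt : ∀ ε ∈ Ioc (a / 2) a,
      ENNReal.ofReal √(1 + log (2 * P.card)) ≤ 3 * sqrtLogPacking T ε := fun ε hε =>
    ofReal_sqrt_one_add_log_two_mul_le hP.card_pos
      ((Finset.card_le_card hPN).trans_eq (Finset.card_product _ _))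
      (ofReal_sqrt_log_two_le_sqrtLogPacking (by linarith [hε.1]) (hε.2.trans_lt haT))
      (ofReal_sqrt_log_card_le_sqrtLogPacking hN₁ hε.2)
      (ofReal_sqrt_log_card_le_sqrtLogPacking hN₂ hε.2)
  calc psi2Norm μ (fun ω => pairSup (X · ω) P)
      ≤ ENNReal.ofReal (4 * (3 * a) * √(1 + log (2 * P.card))) :=
        hX.psi2Norm_pairSup_le hmeas hP (by positivity) hPa
    _ = ENNReal.ofReal 24 *
          (ENNReal.ofReal (a - a / 2) * ENNReal.ofReal √(1 + log (2 * P.card))) := by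
        rw [← ENNReal.ofReal_mul (by linarith), ← ENNReal.ofReal_mul (by norm_num)]
        ring_nf
    _ ≤ ENNReal.ofReal 24 * ∫⁻ ε in Ioc (a / 2) a, 3 * sqrtLogPacking T ε := by
        gcongr
        exact ofReal_sub_mul_le_setLIntegral_Ioc hpt
    _ = ENNReal.ofReal 72 * ∫⁻ ε in Ioc (a / 2) a, sqrtLogPacking T ε := by
        rw [lintegral_const_mul' _ _ (by norm_num), ← mul_assoc, ← ENNReal.ofReal_ofNat 3,
          ← ENNReal.ofReal_mul (by norm_num)]
        norm_num

lemma psi2Norm_pairSup_link_le [IsProbabilityMeasure μ] [DecidableEq T]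
    (hX : IsSubGaussianProcess μ X) (hmeas : ∀ t, Measurable (X t)) {F N₁ N₂ : Finset T} (hF : F.Nonempty) {proj₁ proj₂ : T → T} {a b : ℝ}
    (ha : 0 < a) (haT : a < Metric.diam (univ : Set T)) (hab : a ≤ b) (hb : b ≤ 2 * a)
    (hN₁ : ∀ u ∈ N₁, ∀ v ∈ N₁, u ≠ v → a < dist u v)
    (hN₂ : ∀ u ∈ N₂, ∀ v ∈ N₂, u ≠ v → b < dist u v)
    (hproj₁ : ∀ t ∈ F, proj₁ t ∈ N₁ ∧ dist t (proj₁ t) ≤ a)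
    (hproj₂ : ∀ t ∈ F, proj₂ t ∈ N₂ ∧ dist t (proj₂ t) ≤ b) :
    psi2Norm μ (fun ω => pairSup (X · ω) (F.image fun t => (proj₁ t, proj₂ t))) ≤
      ENNReal.ofReal 72 * ∫⁻ ε in Ioc (a / 2) a, sqrtLogPacking T ε := by
  refine hX.psi2Norm_pairSup_le_setLIntegral hmeas (hF.image _) ?_ ha haT hN₁
    (fun u hu v hv huv => hab.trans_lt (hN₂ u hu v hv huv)) ?_
  · exact Finset.image_subset_iff.2 fun t ht =>
      Finset.mem_product.2 ⟨(hproj₁ t ht).1, (hproj₂ t ht).1⟩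
  · simp only [Finset.forall_mem_image]
    intro t ht
    calc dist (proj₁ t) (proj₂ t) ≤ dist (proj₁ t) t + dist t (proj₂ t) := dist_triangle _ _ _
      _ ≤ a + b := add_le_add (dist_comm t _ ▸ (hproj₁ t ht).2) (hproj₂ t ht).2
      _ ≤ 3 * a := by linarith

lemma psi2Norm_pairSup_eq_zero [Countable T] (hX : IsSubGaussianProcess μ X) {F : Finset T}
    (hF : ∀ s ∈ F, ∀ t ∈ F, dist s t = 0) :
    psi2Norm μ (fun ω => pairSup (X · ω) (F ×ˢ F)) = 0 := by
  refine le_antisymm ((psi2Norm_mono_ae ?_).trans_eq (psi2Norm_zero (μ := μ))) zero_le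
  filter_upwards [hX.ae_forall_eq_of_dist_eq_zero] with ω hω
  rw [Pi.zero_apply, abs_zero, abs_nonpos_iff]
  refine le_antisymm (pairSup_le le_rfl fun p hp => ?_) pairSup_nonneg
  obtain ⟨hs, ht⟩ := Finset.mem_product.1 hp
  rw [hω _ _ (hF _ hs _ ht), sub_self, abs_zero]

lemma psi2Norm_pairSup_le_two_mul_sum [Countable T] [DecidableEq T] (hX : IsSubGaussianProcess μ X)
    (hmeas : ∀ t, Measurable (X t)) {F : Finset T} {proj : ℕ → T → T} {m : ℕ}
    (htop : ∀ s ∈ F, ∀ t ∈ F, proj 0 s = proj 0 t) (hbot : ∀ t ∈ F, dist (proj m t) t = 0) :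
    psi2Norm μ (fun ω => pairSup (X · ω) (F ×ˢ F)) ≤
      2 * ∑ k ∈ Finset.range m,
        psi2Norm μ (fun ω => pairSup (X · ω) (F.image fun t => (proj (k + 1) t, proj k t))) := by
  set M : ℕ → Ω → ℝ := fun k ω => pairSup (X · ω) (F.image fun t => (proj (k + 1) t, proj k t))
  have hM : ∀ k, AEMeasurable (M k) μ := fun k => (measurable_pairSup hmeas _).aemeasurable
  calc psi2Norm μ (fun ω => pairSup (X · ω) (F ×ˢ F))
      ≤ psi2Norm μ ((∑ k ∈ Finset.range m, M k) + ∑ k ∈ Finset.range m, M k) := by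
        refine psi2Norm_mono_ae ?_
        filter_upwards [hX.ae_forall_eq_of_dist_eq_zero] with ω hω
        rw [abs_of_nonneg pairSup_nonneg, Pi.add_apply, Finset.sum_apply, ← two_mul]
        exact (pairSup_le_two_mul_sum_chain _ F proj m htop fun t ht => hω _ _ (hbot t ht)).trans
          (le_abs_self _)
    _ ≤ 2 * ∑ k ∈ Finset.range m, psi2Norm μ (M k) := by
        rw [two_mul]
        refine (psi2Norm_add_le (Finset.aemeasurable_sum _ fun k _ => hM k)).trans ?_
        gcongr <;> exact psi2Norm_sum_le _ fun k _ => hM k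

theorem psi2Norm_pairSup_le_lintegral_sqrtLogPacking [Countable T] [IsProbabilityMeasure μ]
    (hX : IsSubGaussianProcess μ X) (hmeas : ∀ t, Measurable (X t)) (hbdd : Bornology.IsBounded (univ : Set T)) (F : Finset T) :
    psi2Norm μ (fun ω => pairSup (X · ω) (F ×ˢ F)) ≤
      ENNReal.ofReal 144 * ∫⁻ ε in Ioc 0 (Metric.diam (univ : Set T)), sqrtLogPacking T ε := by
  classical
  set Δ := Metric.diam (univ : Set T)
  have hdiam (s t : T) : dist s t ≤ Δ := Metric.dist_le_diam_of_mem hbdd (mem_univ s) (mem_univ t)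
  by_cases hdeg : ∀ s ∈ F, ∀ t ∈ F, dist s t = 0
  · rw [hX.psi2Norm_pairSup_eq_zero hdeg]
    exact zero_le
  push Not at hdeg
  obtain ⟨s₀, hs₀, t₀, -, hst₀⟩ := hdeg
  have hΔ : 0 < Δ := (dist_nonneg.lt_of_ne' hst₀).trans_le (hdiam _ _)
  set e : ℕ → ℝ := fun k => Δ / 2 ^ k
  have he : ∀ k, 0 < e k := fun k => by positivity
  have he2 : ∀ k, 2 * e (k + 1) = e k := fun k => by simp only [e, pow_succ]; field_simp
  choose N hNF hNsep proj hproj using fun k => exists_separated_net F (he k).le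
  obtain ⟨m, hm⟩ := (eventually_forall_dist_le_imp_eq_zero F
    (tendsto_const_nhds.div_atTop (tendsto_pow_atTop_atTop_of_one_lt one_lt_two))).exists
  have htop : ∀ s ∈ F, ∀ t ∈ F, proj 0 s = proj 0 t := fun s hs t ht => by
    by_contra hne
    exact (hNsep 0 _ (hproj 0 s hs).1 _ (hproj 0 t ht).1 hne).not_ge (by simpa [e] using hdiam _ _)
  have hbot : ∀ t ∈ F, dist (proj m t) t = 0 := fun t ht =>
    hm _ (hNF m (hproj m t ht).1) t ht (dist_comm t _ ▸ (hproj m t ht).2)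
  calc psi2Norm μ (fun ω => pairSup (X · ω) (F ×ˢ F))
      ≤ 2 * ∑ k ∈ Finset.range m,
          psi2Norm μ (fun ω => pairSup (X · ω) (F.image fun t => (proj (k + 1) t, proj k t))) :=
        hX.psi2Norm_pairSup_le_two_mul_sum hmeas htop hbot
    _ ≤ 2 * ∑ k ∈ Finset.range m,
          ENNReal.ofReal 72 * ∫⁻ ε in Ioc (e (k + 1) / 2) (e (k + 1)), sqrtLogPacking T ε := by
        gcongr with k
        exact hX.psi2Norm_pairSup_link_le hmeas ⟨s₀, hs₀⟩ (he _)
          (div_lt_self hΔ (one_lt_pow₀ one_lt_two k.succ_ne_zero)) (by linarith [he (k + 1), he2 k])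
          (he2 k).ge (hNsep (k + 1)) (hNsep k) (hproj (k + 1)) (hproj k)
    _ ≤ 2 * (ENNReal.ofReal 72 * ∫⁻ ε in Ioc 0 Δ, sqrtLogPacking T ε) := by
        rw [← Finset.mul_sum]
        gcongr
        exact sum_setLIntegral_dyadic_le hΔ.le _ m
    _ = ENNReal.ofReal 144 * ∫⁻ ε in Ioc 0 Δ, sqrtLogPacking T ε := by
        rw [← mul_assoc, ← ENNReal.ofReal_ofNat 2, ← ENNReal.ofReal_mul (by norm_num)]
        norm_num

end IsSubGaussianProcess

lemma psi2Norm_iSup_abs_sub_le {Ω T : Type*} [MeasurableSpace Ω] [Countable T] {μ : Measure Ω}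
    {X : T → Ω → ℝ} (hmeas : ∀ t, Measurable (X t)) {D : ℝ≥0∞}
    (hD : ∀ F : Finset T, psi2Norm μ (fun ω => pairSup (X · ω) (F ×ˢ F)) ≤ D) :
    psi2Norm μ (fun ω => ⨆ (s : T) (t : T), |X s ω - X t ω|) ≤ D := by
  classical
  rcases isEmpty_or_nonempty T with hT | hT
  · convert hD ∅ using 3 with ω
    simp [pairSup]
  obtain ⟨enum, henum⟩ := exists_surjective_nat T
  set F : ℕ → Finset T := fun n => (Finset.range n).image enum
  have hF : Monotone F := fun i j hij =>
    Finset.image_subset_image (Finset.range_subset_range.2 hij)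
  refine psi2Norm_le_of_monotone (fun n => (measurable_pairSup hmeas (F n ×ˢ F n)).aemeasurable)
    (fun _ _ => pairSup_nonneg) (fun i j hij ω => pairSup_mono (Finset.product_subset_product
      (hF hij) (hF hij))) (fun ω b hb => ?_) fun n => hD _
  have hb0 : 0 ≤ b := pairSup_nonneg.trans (hb 0)
  rw [abs_of_nonneg (Real.iSup_nonneg fun s => Real.iSup_nonneg fun t => abs_nonneg _)]
  refine Real.iSup_le (fun s => Real.iSup_le (fun t => ?_) hb0) hb0
  obtain ⟨i, rfl⟩ := henum s
  obtain ⟨j, rfl⟩ := henum t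
  have hmem (k : ℕ) (hk : k ≤ max i j) : enum k ∈ F (max i j + 1) :=
    Finset.mem_image_of_mem _ (Finset.mem_range.2 (Nat.lt_succ_of_le hk))
  exact (abs_sub_le_pairSup (p := (enum i, enum j)) (Finset.mem_product.2
    ⟨hmem i (le_max_left i j), hmem j (le_max_right i j)⟩)).trans (hb _)

/-- **maximal inequality / Dudley entropy bound.** There is an absolute
constant `K > 0` such that for every probability space, every countable pseudometric index
set `T` of finite diameter and every separable sub-Gaussian process `{X_t : t ∈ T}`
(`X_s = X_t` a.s. when `d(s,t) = 0`, and
`P(|X_s − X_t| > z) ≤ 2 exp(−z²/(2 d(s,t)²))` when `d(s,t) > 0`), one has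
`‖sup_{s,t} |X_s − X_t|‖_{ψ₂} ≤ K ∫₀^{diam T} √(log D(ε, T, d)) dε`,
the integral being `+∞` if the integrand fails to be integrable. -/
theorem maximal_inequality_subGaussian :
    ∃ K : ℝ, 0 < K ∧
      ∀ (Ωs : Type u) (T : Type v) [MeasurableSpace Ωs] [PseudoMetricSpace T] [Countable T]
        (μ : Measure Ωs), IsProbabilityMeasure μ →
        Bornology.IsBounded (Set.univ : Set T) →
        ∀ X : T → Ωs → ℝ, (∀ t, Measurable (X t)) →
        (∀ s t : T, dist s t = 0 → ∀ᵐ ω ∂μ, X s ω = X t ω) →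
        (∀ s t : T, 0 < dist s t → ∀ z : ℝ, 0 < z →
          μ {ω | z < |X s ω - X t ω|}
            ≤ ENNReal.ofReal (2 * Real.exp (-z ^ 2 / (2 * (dist s t) ^ 2)))) →
        psi2Norm μ (fun ω => ⨆ (s : T) (t : T), |X s ω - X t ω|)
          ≤ ENNReal.ofReal K *
              ∫⁻ ε in Set.Ioc (0 : ℝ) (Metric.diam (Set.univ : Set T)),
                sqrtLogPacking T ε := by
  refine ⟨144, by norm_num, fun Ωs T _ _ _ μ _ hbdd X hmeas hzero htail => ?_⟩
  exact psi2Norm_iSup_abs_sub_le hmeas fun F =>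
    IsSubGaussianProcess.psi2Norm_pairSup_le_lintegral_sqrtLogPacking ⟨hzero, htail⟩ hmeas hbdd F
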